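/- arXiv:2112.11114 — 2 statements merged into one kernel-verified Lean document; each statement's English description precedes it below -/
import Mathlib

section
/- Let ℓ: ℝ^p → ℝ be convex and differentiable, a ∈ (0,1), λ > 0, and let β̂ be a minimizer over ℝ^p of β ↦ ℓ(β) + λ Σ_{k=1}^r ‖W_k β_k‖. If |W^{-1} ∇ℓ(β°)|_∞ ≤ aλ, then v := β̂ − β° belongs to the cone C_{a,W} = {v ∈ ℝ^p : Σ_{k ∉ S} ‖W_k v_k‖ ≤ Σ_{k ∈ S} ‖W_k v_k‖ + a|Wv|_1}. -/
open scoped BigOperators Classical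

/-- The group norm `‖W_k β_k‖`. -/
noncomputable def groupNorm {r : ℕ} {p : Fin r → ℕ}
    (w β : ((k : Fin r) × Fin (p k)) → ℝ) (k : Fin r) : ℝ :=
  Real.sqrt (∑ j : Fin (p k), (w ⟨k, j⟩ * β ⟨k, j⟩) ^ 2)

/-- Coordinate `c` of the gradient `∇ℓ(β)`. -/
noncomputable def gradCoord {r : ℕ} {p : Fin r → ℕ}
    (ℓ : (((k : Fin r) × Fin (p k)) → ℝ) → ℝ)
    (β : ((k : Fin r) × Fin (p k)) → ℝ) (c : (k : Fin r) × Fin (p k)) : ℝ :=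
  fderiv ℝ ℓ β (Pi.single c 1)

/-- Membership in the cone `C_{a,W}` (relative to the support `S` of `βo`):
`∑_{k ∉ S} ‖W_k v_k‖ ≤ ∑_{k ∈ S} ‖W_k v_k‖ + a |W v|₁`, where
`S = {k : βo_k ≠ 0}`. -/
def InCone {r : ℕ} {p : Fin r → ℕ}
    (βo w : ((k : Fin r) × Fin (p k)) → ℝ) (a : ℝ)
    (v : ((k : Fin r) × Fin (p k)) → ℝ) : Prop :=
  ∑ k : Fin r, (if ∀ j : Fin (p k), βo ⟨k, j⟩ = 0 then groupNorm w v k else 0)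
    ≤ ∑ k : Fin r, (if ∀ j : Fin (p k), βo ⟨k, j⟩ = 0 then 0 else groupNorm w v k)
      + a * ∑ c, |w c * v c|

/-!
Testing the minimality of `β̂` against `β°` gives
`λ ∑ ‖W_k β̂_k‖ ≤ λ ∑ ‖W_k β°_k‖ + ℓ(β°) - ℓ(β̂)`. By convexity
`ℓ(β°) - ℓ(β̂) ≤ -⟨∇ℓ(β°), v⟩`, and the weighted Hölder inequality bounds this by
`|W⁻¹ ∇ℓ(β°)|_∞ |W v|₁ ≤ aλ |W v|₁`. On a group outside `S` we have `‖W_k β̂_k‖ = ‖W_k v_k‖`,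
and on a group in `S` the triangle inequality gives `‖W_k β̂_k‖ - ‖W_k β°_k‖ ≥ -‖W_k v_k‖`;
summing over the groups yields the cone condition.
-/

theorem ConvexOn.apply_sub_le_sub_of_hasFDerivAt {E : Type*} [NormedAddCommGroup E]
    [NormedSpace ℝ E]
    {s : Set E} {f : E → ℝ} {f' : E →L[ℝ] ℝ} {x y : E} (hf : ConvexOn ℝ s f)
    (hx : x ∈ s) (hy : y ∈ s) (hfx : HasFDerivAt f f' x) :
    f' (y - x) ≤ f y - f x := by
  have hline : HasDerivAt (f ∘ AffineMap.lineMap (k := ℝ) x y) (f' (y - x)) 0 :=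
    hfx.comp_hasDerivAt_of_eq 0 AffineMap.hasDerivAt_lineMap
      (AffineMap.lineMap_apply_zero x y).symm
  simpa [slope] using (hf.comp_affineMap (AffineMap.lineMap x y)).le_slope_of_hasDerivAt
    (x := 0) (y := 1) (by simpa using hx) (by simpa using hy) one_pos hline

theorem ContinuousLinearMap.apply_eq_sum_mul_single {ι : Type*} [Fintype ι] [DecidableEq ι]
    (L : (ι → ℝ) →L[ℝ] ℝ) (v : ι → ℝ) : L v = ∑ i, v i * L (Pi.single i 1) := by
  conv_lhs => rw [← Finset.univ_sum_single v]
  refine (map_sum L _ _).trans (Finset.sum_congr rfl fun i _ => ?_)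
  rw [← smul_eq_mul, ← map_smul, ← Pi.single_smul, smul_eq_mul, mul_one]

theorem abs_sum_mul_le_of_abs_div_le {ι : Type*} (s : Finset ι) {v g w : ι → ℝ} {M : ℝ}
    (hw : ∀ i ∈ s, w i ≠ 0) (hg : ∀ i ∈ s, |g i / w i| ≤ M) :
    |∑ i ∈ s, v i * g i| ≤ M * ∑ i ∈ s, |w i * v i| := by
  rw [Finset.mul_sum]
  refine (Finset.abs_sum_le_sum_abs _ _).trans (Finset.sum_le_sum fun i hi => ?_)
  calc |v i * g i| = |g i / w i| * |w i * v i| := by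
        rw [← abs_mul]; field_simp [hw i hi]
    _ ≤ M * |w i * v i| := mul_le_mul_of_nonneg_right (hg i hi) (abs_nonneg _)

section GroupNorm

variable {r : ℕ} {p : Fin r → ℕ}

theorem groupNorm_eq_norm (w β : ((k : Fin r) × Fin (p k)) → ℝ) (k : Fin r) :
    groupNorm w β k = ‖WithLp.toLp 2 fun j : Fin (p k) => w ⟨k, j⟩ * β ⟨k, j⟩‖ := by
  simp [groupNorm, EuclideanSpace.norm_eq, mul_pow]

theorem groupNorm_sub_le_groupNorm_sub (w β β' : ((k : Fin r) × Fin (p k)) → ℝ) (k : Fin r) :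
    groupNorm w β' k - groupNorm w β k ≤ groupNorm w (fun c => β c - β' c) k := by
  have hsub : groupNorm w (fun c => β c - β' c) k
      = ‖WithLp.toLp 2 (fun j : Fin (p k) => w ⟨k, j⟩ * β ⟨k, j⟩)
          - WithLp.toLp 2 (fun j : Fin (p k) => w ⟨k, j⟩ * β' ⟨k, j⟩)‖ := by
    rw [groupNorm_eq_norm, ← WithLp.toLp_sub]
    simp only [mul_sub, Pi.sub_def]
  rw [hsub, groupNorm_eq_norm, groupNorm_eq_norm, norm_sub_rev]
  exact norm_sub_norm_le _ _

theorem ite_groupNorm_sub_le (w β β' : ((k : Fin r) × Fin (p k)) → ℝ) (k : Fin r) :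
    (if ∀ j : Fin (p k), β' ⟨k, j⟩ = 0 then groupNorm w (fun c => β c - β' c) k else 0)
        - (if ∀ j : Fin (p k), β' ⟨k, j⟩ = 0 then 0 else groupNorm w (fun c => β c - β' c) k)
      ≤ groupNorm w β k - groupNorm w β' k := by
  split_ifs with hzero
  · simp [groupNorm, hzero]
  · linarith [groupNorm_sub_le_groupNorm_sub w β β' k]

theorem inCone_of_sum_groupNorm_le {w β β' : ((k : Fin r) × Fin (p k)) → ℝ} {a : ℝ}
    (h : ∑ k, groupNorm w β k ≤ ∑ k, groupNorm w β' k + a * ∑ c, |w c * (β c - β' c)|) :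
    InCone β' w a (fun c => β c - β' c) := by
  have := Finset.sum_le_sum fun k (_ : k ∈ Finset.univ) => ite_groupNorm_sub_le w β β' k
  rw [Finset.sum_sub_distrib, Finset.sum_sub_distrib] at this
  unfold InCone
  linarith

end GroupNorm

theorem groupLasso_cone_membership_general {r : ℕ} {p : Fin r → ℕ}
    (ℓ : (((k : Fin r) × Fin (p k)) → ℝ) → ℝ)
    (hconv : ConvexOn ℝ Set.univ ℓ) (hdiff : Differentiable ℝ ℓ)
    (w : ((k : Fin r) × Fin (p k)) → ℝ) (hw : ∀ c, 0 < w c)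
    (a : ℝ)
    (lam : ℝ) (hlam : 0 < lam)
    (βhat βo : ((k : Fin r) × Fin (p k)) → ℝ)
    (hmin : ∀ β : ((k : Fin r) × Fin (p k)) → ℝ,
      ℓ βhat + lam * ∑ k : Fin r, groupNorm w βhat k
        ≤ ℓ β + lam * ∑ k : Fin r, groupNorm w β k)
    (hgrad : (⨆ c : (k : Fin r) × Fin (p k), |gradCoord ℓ βo c / w c|) ≤ a * lam) :
    InCone βo w a (fun c => βhat c - βo c) := by
  set T := ∑ c, |w c * (βhat c - βo c)|
  have hgrad_le : ∀ c, |gradCoord ℓ βo c / w c| ≤ a * lam := fun c =>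
    (le_ciSup (Set.finite_range _).bddAbove c).trans hgrad
  have hloss : ℓ βo - ℓ βhat ≤ a * lam * T :=
    calc ℓ βo - ℓ βhat ≤ -fderiv ℝ ℓ βo (βhat - βo) := by
          linarith [hconv.apply_sub_le_sub_of_hasFDerivAt (y := βhat) trivial trivial
            (hdiff βo).hasFDerivAt]
      _ = -∑ c, (βhat c - βo c) * gradCoord ℓ βo c := by
          rw [ContinuousLinearMap.apply_eq_sum_mul_single]; rfl
      _ ≤ a * lam * T := (neg_le_abs _).trans <|
          abs_sum_mul_le_of_abs_div_le _ (fun c _ => (hw c).ne') fun c _ => hgrad_le c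
  refine inCone_of_sum_groupNorm_le (le_of_mul_le_mul_left ?_ hlam)
  linarith [hmin βo]

/-- If `β̂` minimizes the Group Lasso objective and `|W⁻¹ ∇ℓ(β°)|_∞ ≤ aλ`,
then `v = β̂ − β°` belongs to the cone `C_{a,W}`. -/
theorem groupLasso_cone_membership {r : ℕ} {p : Fin r → ℕ}
    (ℓ : (((k : Fin r) × Fin (p k)) → ℝ) → ℝ)
    (hconv : ConvexOn ℝ Set.univ ℓ) (hdiff : Differentiable ℝ ℓ)
    (w : ((k : Fin r) × Fin (p k)) → ℝ) (hw : ∀ c, 0 < w c)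
    (a : ℝ) (ha : a ∈ Set.Ioo (0 : ℝ) 1)
    (lam : ℝ) (hlam : 0 < lam)
    (βhat βo : ((k : Fin r) × Fin (p k)) → ℝ)
    (hmin : ∀ β : ((k : Fin r) × Fin (p k)) → ℝ,
      ℓ βhat + lam * ∑ k : Fin r, groupNorm w βhat k
        ≤ ℓ β + lam * ∑ k : Fin r, groupNorm w β k)
    (hgrad : (⨆ c : (k : Fin r) × Fin (p k), |gradCoord ℓ βo c / w c|) ≤ a * lam) :
    InCone βo w a (fun c => βhat c - βo c) :=
  groupLasso_cone_membership_general ℓ hconv hdiff w hw a lam hlam βhat βo hmin hgrad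
end

section
/- (Proposition 3, bound part) Consider the linear-model loss ℓ(β) = Σ_{i=1}^n [ (x_{i·}ᵀβ)²/2 − y_i x_{i·}ᵀβ ] with a design whose columns x_{j,k} are pairwise orthogonal and nonzero, and weights w_{j,k} = ‖x_{j,k}‖^q for a fixed q ∈ ℝ. Then for every a ∈ (0,1), x_W² ζ_{a,W}^{-2} ≤ x_m^{-2} (x_M / x_m)^{max(0, |2q−3| − 1)}. -/
section Aux

private lemma max_exp_eq (q : ℝ) :
    max 0 (2 - 2 * q) + max 0 (2 * q - 4) = max 0 (|2 * q - 3| - 1) := by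
  rcases le_total q 1 with h1 | h1
  · rw [max_eq_right (by linarith : (0:ℝ) ≤ 2 - 2 * q),
      max_eq_left (by linarith : 2 * q - 4 ≤ (0:ℝ)),
      abs_of_nonpos (by linarith : 2 * q - 3 ≤ (0:ℝ)),
      max_eq_right (by linarith : (0:ℝ) ≤ -(2 * q - 3) - 1)]
    ring
  · rcases le_total q 2 with h2 | h2
    · have habs : |2 * q - 3| ≤ 1 := abs_le.mpr ⟨by linarith, by linarith⟩
      rw [max_eq_left (by linarith : 2 - 2 * q ≤ (0:ℝ)),
        max_eq_left (by linarith : 2 * q - 4 ≤ (0:ℝ)),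
        max_eq_left (by linarith : |2 * q - 3| - 1 ≤ (0:ℝ))]
      ring
    · rw [max_eq_left (by linarith : 2 - 2 * q ≤ (0:ℝ)),
        max_eq_right (by linarith : (0:ℝ) ≤ 2 * q - 4),
        abs_of_nonneg (by linarith : (0:ℝ) ≤ 2 * q - 3),
        max_eq_right (by linarith : (0:ℝ) ≤ 2 * q - 3 - 1)]
      ring

private lemma rpow_interval_bound {xm xM c : ℝ} (e : ℝ) (hxm : 0 < xm)
    (hc1 : xm ≤ c) (hc2 : c ≤ xM) :
    c ^ e ≤ xm ^ e * (xM / xm) ^ max 0 e := by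
  have hc : 0 < c := hxm.trans_le hc1
  have hxM : 0 < xM := hc.trans_le hc2
  rcases le_total 0 e with he | he
  · rw [max_eq_right he, ← Real.mul_rpow hxm.le (by positivity),
      mul_div_cancel₀ _ hxm.ne']
    exact Real.rpow_le_rpow hc.le hc2 he
  · rw [max_eq_left he, Real.rpow_zero, mul_one]
    exact Real.rpow_le_rpow_of_nonpos hxm hc1 he

private lemma rpow_sq {x : ℝ} (hx : 0 ≤ x) (e : ℝ) : (x ^ e) ^ 2 = x ^ (2 * e) := by
  rw [← Real.rpow_natCast (x ^ e) 2, ← Real.rpow_mul hx]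
  congr 1
  push_cast
  ring

end Aux

open scoped BigOperators ENNReal Classical

/-- The sup norm `|v|_∞`. -/
noncomputable def supNorm {ι : Type*} [Fintype ι] (v : ι → ℝ) : ℝ := ⨆ c, |v c|

/-- The Euclidean norm `‖x_{j,k}‖` of column `c = (j,k)` of `X`. -/
noncomputable def colNorm {n r : ℕ} {p : Fin r → ℕ}
    (X : Fin n → ((k : Fin r) × Fin (p k)) → ℝ) (c : (k : Fin r) × Fin (p k)) : ℝ :=
  Real.sqrt (∑ i, (X i c) ^ 2)

/-- Coordinate `c` of `XᵀXν`, which in the linear model equals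
`∇ℓ(β° + ν) − ∇ℓ(β°)`. -/
def XtXv {n r : ℕ} {p : Fin r → ℕ}
    (X : Fin n → ((k : Fin r) × Fin (p k)) → ℝ)
    (ν : ((k : Fin r) × Fin (p k)) → ℝ) (c : (k : Fin r) × Fin (p k)) : ℝ :=
  ∑ i, (∑ c', X i c' * ν c') * X i c

/-- The Cone Invertibility Factor for the linear model,
`ζ_{a,W} = inf_{0 ≠ ν ∈ C_{a,W}} |W⁻¹XᵀXν|_∞ / |ν|_∞`, valued in `ℝ≥0∞`
(with the convention `inf ∅ = ∞`). -/
noncomputable def cifLin {n r : ℕ} {p : Fin r → ℕ}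
    (X : Fin n → ((k : Fin r) × Fin (p k)) → ℝ)
    (βo w : ((k : Fin r) × Fin (p k)) → ℝ) (a : ℝ) : ℝ≥0∞ :=
  ⨅ ν : {ν : ((k : Fin r) × Fin (p k)) → ℝ // ν ≠ 0 ∧ InCone βo w a ν},
    ENNReal.ofReal (supNorm (fun c => XtXv X ν.1 c / w c) / supNorm ν.1)


/-- Proposition 3 (bound part): for a linear model with an orthogonal design and weights
`w_{j,k} = ‖x_{j,k}‖^q`, one has `x_W² ζ_{a,W}⁻² ≤ x_m⁻² (x_M/x_m)^{max(0,|2q−3|−1)}`. -/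
theorem cif_weight_bound_orthogonal {n r : ℕ} {p : Fin r → ℕ}
    (X : Fin n → ((k : Fin r) × Fin (p k)) → ℝ)
    (hXnz : ∀ c, (fun i => X i c) ≠ 0)
    (hXorth : ∀ c₁ c₂ : (k : Fin r) × Fin (p k), c₁ ≠ c₂ → ∑ i, X i c₁ * X i c₂ = 0)
    (q : ℝ) (βo : ((k : Fin r) × Fin (p k)) → ℝ)
    (a : ℝ) (ha : a ∈ Set.Ioo (0 : ℝ) 1) :
    ENNReal.ofReal (⨆ c, colNorm X c / colNorm X c ^ q) ^ 2 *
        (cifLin X βo (fun c => colNorm X c ^ q) a)⁻¹ ^ 2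
      ≤ ENNReal.ofReal ((⨅ c, colNorm X c) ^ (-2 : ℝ) *
          ((⨆ c, colNorm X c) / (⨅ c, colNorm X c)) ^ max 0 (|2 * q - 3| - 1)) := by
  obtain ⟨ha0, ha1⟩ := ha
  cases isEmpty_or_nonempty ((k : Fin r) × Fin (p k)) with
  | inl hempty =>
    have hE : IsEmpty {ν : ((k : Fin r) × Fin (p k)) → ℝ //
        ν ≠ 0 ∧ InCone βo (fun c => colNorm X c ^ q) a ν} :=
      ⟨fun ⟨ν, hν, _⟩ => hν (Subsingleton.elim ν 0)⟩
    rw [cifLin, iInf_of_empty]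
    simp
  | inr hne =>
    -- positivity of column norms
    have hcol : ∀ c, 0 < colNorm X c := by
      intro c
      obtain ⟨i, hi⟩ := Function.ne_iff.mp (hXnz c)
      exact Real.sqrt_pos.mpr <| Finset.sum_pos'
        (fun j _ => sq_nonneg _) ⟨i, Finset.mem_univ i, pow_two_pos_of_ne_zero hi⟩
    set xm : ℝ := ⨅ c, colNorm X c with hxm_def
    set xM : ℝ := ⨆ c, colNorm X c with hxM_def
    have hxm_le : ∀ c, xm ≤ colNorm X c := fun c =>
      ciInf_le (Finite.bddBelow_range _) c
    have hle_xM : ∀ c, colNorm X c ≤ xM := fun c =>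
      le_ciSup (Finite.bddAbove_range _) c
    have hxm : 0 < xm := by
      obtain ⟨c0, hc0⟩ := Finite.exists_min (colNorm X)
      exact lt_of_lt_of_le (hcol c0) (le_ciInf hc0)
    -- the key identity for XtXv under orthogonality
    have hXtX : ∀ (ν : ((k : Fin r) × Fin (p k)) → ℝ) c,
        XtXv X ν c / colNorm X c ^ q = ν c * colNorm X c ^ (2 - q) := by
      intro ν c
      have h1 : XtXv X ν c = ν c * colNorm X c ^ 2 := by
        rw [XtXv]
        calc ∑ i, (∑ c', X i c' * ν c') * X i c
            = ∑ i, ∑ c', ν c' * (X i c' * X i c) := by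
              refine Finset.sum_congr rfl fun i _ => ?_
              rw [Finset.sum_mul]
              exact Finset.sum_congr rfl fun c' _ => by ring
          _ = ∑ c', ν c' * ∑ i, X i c' * X i c := by
              rw [Finset.sum_comm]
              exact Finset.sum_congr rfl fun c' _ => (Finset.mul_sum _ _ _).symm
          _ = ν c * ∑ i, X i c * X i c := by
              refine Finset.sum_eq_single c (fun c' _ hc' => ?_)
                (fun h => absurd (Finset.mem_univ c) h)
              rw [hXorth c' c hc', mul_zero]
          _ = ν c * colNorm X c ^ 2 := by
              rw [colNorm, Real.sq_sqrt (Finset.sum_nonneg fun i _ => sq_nonneg _)]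
              congr 1
              exact Finset.sum_congr rfl fun i _ => (pow_two _).symm
      rw [h1, mul_div_assoc]
      congr 1
      rw [← Real.rpow_natCast (colNorm X c) 2, ← Real.rpow_sub (hcol c)]
      norm_num
    -- argmin of colNorm ^ (2 - q)
    obtain ⟨c₂, hc₂⟩ := Finite.exists_min (fun c => colNorm X c ^ (2 - q))
    set m : ℝ := colNorm X c₂ ^ (2 - q) with hm_def
    have hm : 0 < m := Real.rpow_pos_of_pos (hcol c₂) _
    -- lower bound for the CIF
    have hcif : ENNReal.ofReal m ≤ cifLin X βo (fun c => colNorm X c ^ q) a := by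
      rw [cifLin]
      refine le_iInf ?_
      rintro ⟨ν, hν, -⟩
      refine ENNReal.ofReal_le_ofReal ?_
      show m ≤ (⨆ c, |XtXv X ν c / colNorm X c ^ q|) / ⨆ c, |ν c|
      obtain ⟨cs, hcs⟩ := Finite.exists_max fun c => |ν c|
      have hsup_le : (⨆ c, |ν c|) ≤ |ν cs| := ciSup_le hcs
      have hsup_pos : 0 < ⨆ c, |ν c| := by
        obtain ⟨c, hc⟩ := Function.ne_iff.mp hν
        exact lt_of_lt_of_le (abs_pos.mpr hc)
          (le_ciSup (Finite.bddAbove_range fun c => |ν c|) c)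
      rw [le_div_iff₀ hsup_pos]
      calc m * (⨆ c, |ν c|) ≤ m * |ν cs| := by
            exact mul_le_mul_of_nonneg_left hsup_le hm.le
        _ ≤ colNorm X cs ^ (2 - q) * |ν cs| := by
            exact mul_le_mul_of_nonneg_right (hc₂ cs) (abs_nonneg _)
        _ = |XtXv X ν cs / colNorm X cs ^ q| := by
            rw [hXtX, abs_mul, abs_of_pos (Real.rpow_pos_of_pos (hcol cs) _)]
            ring
        _ ≤ ⨆ c, |XtXv X ν c / colNorm X c ^ q| :=
            le_ciSup (Finite.bddAbove_range fun c => |XtXv X ν c / colNorm X c ^ q|) cs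
    have hinv : (cifLin X βo (fun c => colNorm X c ^ q) a)⁻¹ ≤ ENNReal.ofReal m⁻¹ := by
      rw [ENNReal.ofReal_inv_of_pos hm]
      exact ENNReal.inv_le_inv' hcif
    -- bound the sup term
    set A : ℝ := ⨆ c, colNorm X c / colNorm X c ^ q with hA_def
    obtain ⟨c₁, hc₁⟩ := Finite.exists_max fun c => colNorm X c / colNorm X c ^ q
    have hA_le : A ≤ colNorm X c₁ ^ (1 - q) := by
      refine (ciSup_le hc₁).trans_eq ?_
      rw [Real.rpow_sub (hcol c₁), Real.rpow_one]
    have hA0 : 0 ≤ A :=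
      le_trans (div_nonneg (hcol c₁).le (Real.rpow_nonneg (hcol c₁).le q))
        (le_ciSup (Finite.bddAbove_range fun c => colNorm X c / colNorm X c ^ q) c₁)
    -- combine in ℝ≥0∞
    calc ENNReal.ofReal A ^ 2 * (cifLin X βo (fun c => colNorm X c ^ q) a)⁻¹ ^ 2
        ≤ ENNReal.ofReal A ^ 2 * ENNReal.ofReal m⁻¹ ^ 2 := by gcongr
      _ = ENNReal.ofReal ((A * m⁻¹) ^ 2) := by
          rw [← mul_pow, ← ENNReal.ofReal_mul hA0,
            ← ENNReal.ofReal_pow (by positivity)]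
      _ ≤ ENNReal.ofReal (xm ^ (-2 : ℝ) * (xM / xm) ^ max 0 (|2 * q - 3| - 1)) := by
          refine ENNReal.ofReal_le_ofReal ?_
          have hminv : m⁻¹ = colNorm X c₂ ^ (q - 2) := by
            rw [hm_def, ← Real.rpow_neg (hcol c₂).le]
            norm_num
          have step1 : (A * m⁻¹) ^ 2 ≤
              (colNorm X c₁ ^ (1 - q) * colNorm X c₂ ^ (q - 2)) ^ 2 := by
            apply pow_le_pow_left₀ (mul_nonneg hA0 (inv_nonneg.mpr hm.le))
            rw [hminv]
            exact mul_le_mul_of_nonneg_right hA_le (Real.rpow_nonneg (hcol c₂).le _)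
          refine step1.trans ?_
          rw [mul_pow, rpow_sq (hcol c₁).le, rpow_sq (hcol c₂).le]
          have h1 : colNorm X c₁ ^ (2 * (1 - q)) ≤
              xm ^ (2 * (1 - q)) * (xM / xm) ^ max 0 (2 * (1 - q)) :=
            rpow_interval_bound _ hxm (hxm_le c₁) (hle_xM c₁)
          have h2 : colNorm X c₂ ^ (2 * (q - 2)) ≤
              xm ^ (2 * (q - 2)) * (xM / xm) ^ max 0 (2 * (q - 2)) :=
            rpow_interval_bound _ hxm (hxm_le c₂) (hle_xM c₂)
          have hR : 0 < xM / xm := by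
            have := (hxm.trans_le (hxm_le c₂)).trans_le (hle_xM c₂)
            positivity
          calc colNorm X c₁ ^ (2 * (1 - q)) * colNorm X c₂ ^ (2 * (q - 2))
              ≤ (xm ^ (2 * (1 - q)) * (xM / xm) ^ max 0 (2 * (1 - q))) *
                (xm ^ (2 * (q - 2)) * (xM / xm) ^ max 0 (2 * (q - 2))) := by
                exact mul_le_mul h1 h2 (Real.rpow_nonneg (hcol c₂).le _)
                  (mul_nonneg (Real.rpow_nonneg hxm.le _) (Real.rpow_nonneg hR.le _))
            _ = xm ^ (-2 : ℝ) * (xM / xm) ^ max 0 (|2 * q - 3| - 1) := by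
                rw [mul_mul_mul_comm, ← Real.rpow_add hxm, ← Real.rpow_add hR]
                have e1 : 2 * (1 - q) + 2 * (q - 2) = (-2 : ℝ) := by ring
                have e2 : max 0 (2 * (1 - q)) + max 0 (2 * (q - 2))
                    = max 0 (|2 * q - 3| - 1) := by
                  have := max_exp_eq q
                  have a1 : 2 * (1 - q) = 2 - 2 * q := by ring
                  have a2 : 2 * (q - 2) = 2 * q - 4 := by ring
                  rw [a1, a2, this]
                rw [e1, e2]
end
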